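/- arXiv:1908.09199 — 3 statements merged into one kernel-verified Lean document; each statement's English description precedes it below -/
import Mathlib

section
/- For $\alpha > -1$ and $a_n = \prod_{j=1}^{n-1}(1+\alpha/j)$, the series $\sum_{n=1}^{\infty} 1/a_n^2$ converges if and only if $\alpha > 1/2$. -/
open Real Filter Asymptotics Topology

noncomputable def aProd (α : ℝ) (n : ℕ) : ℝ := ∏ j ∈ Finset.Icc 1 (n - 1), (1 + α / (j : ℝ))

/-! Since `a_{n+1} · n! = (α+1)(α+2)⋯(α+n)`, Euler's limit formula for `Γ(α+1)` gives
`n^α / a_{n+1} → Γ(α+1)`, which is nonzero for `α > -1`. Hence `1/a_n²` is comparable to `n^{-2α}`,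
and the claim reduces to the `p`-series test. -/

lemma aProd_succ_succ (α : ℝ) (n : ℕ) :
    aProd α (n + 2) = aProd α (n + 1) * (1 + α / (n + 1)) := by
  rw [aProd, aProd, show n + 2 - 1 = n + 1 by omega, Nat.add_sub_cancel,
    Finset.prod_Icc_succ_top (by omega)]
  push_cast
  rfl

lemma aProd_succ_mul_factorial (α : ℝ) (n : ℕ) :
    aProd α (n + 1) * n.factorial = ∏ j ∈ Finset.range n, (α + 1 + j) := by
  induction n with
  | zero => simp [aProd]
  | succ n ih =>
    rw [aProd_succ_succ, Finset.prod_range_succ, ← ih, Nat.factorial_succ]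
    have hn : (n : ℝ) + 1 ≠ 0 := by positivity
    push_cast
    field_simp
    ring

lemma GammaSeq_add_one_eq_rpow_div_aProd (α : ℝ) {n : ℕ} (hn : n ≠ 0) :
    GammaSeq (α + 1) n = (n : ℝ) ^ α / aProd α (n + 1) * (n / (n + (α + 1))) := by
  have hfact : (n.factorial : ℝ) ≠ 0 := by positivity
  rw [GammaSeq, Finset.prod_range_succ, ← aProd_succ_mul_factorial,
    rpow_add_one (Nat.cast_ne_zero.mpr hn), div_mul_div_comm]
  field_simp
  ring

theorem tendsto_rpow_div_aProd_succ (α : ℝ) :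
    Tendsto (fun n : ℕ => (n : ℝ) ^ α / aProd α (n + 1)) atTop (𝓝 (Gamma (α + 1))) := by
  have hratio : Tendsto (fun n : ℕ => (n : ℝ) / (n + (α + 1))) atTop (𝓝 1) :=
    tendsto_natCast_div_add_atTop (α + 1)
  have hquot := (GammaSeq_tendsto_Gamma (α + 1)).div hratio one_ne_zero
  rw [div_one] at hquot
  refine hquot.congr' ?_
  filter_upwards [eventually_ne_atTop 0, hratio.eventually_ne one_ne_zero] with n hn hne
  rw [Pi.div_apply, GammaSeq_add_one_eq_rpow_div_aProd α hn, mul_div_cancel_right₀ _ hne]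

/-- The series `∑ 1/a_n²` converges if and only if `α > 1/2`. -/
theorem summable_inv_aProd_sq_iff (α : ℝ) (hα : -1 < α) :
    Summable (fun n : ℕ => 1 / (aProd α n) ^ 2) ↔ 1 / 2 < α := by
  have hΓ : Gamma (α + 1) ^ 2 ≠ 0 := (pow_pos (Gamma_pos_of_pos (by linarith)) 2).ne'
  have hsq := (tendsto_rpow_div_aProd_succ α).pow 2
  have hΘ : (fun n : ℕ => (n : ℝ) ^ (-(2 * α))) =Θ[atTop] fun n => 1 / aProd α (n + 1) ^ 2 := by
    refine isTheta_of_div_tendsto_nhds_ne_zero (hsq.congr' ?_) hΓ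
    filter_upwards [eventually_ne_atTop 0] with n hn
    have hpos : (0 : ℝ) < n := by positivity
    rw [rpow_neg hpos.le, mul_comm, rpow_mul hpos.le, rpow_two]
    field_simp
  rw [← summable_nat_add_iff 1, ← hΘ.summable_iff_nat, summable_nat_rpow]
  constructor <;> intro h <;> linarith
end

section
/- Let $(X_n)$ be the minimal random walk with parameters $p, q \in [0,1]$, $s \in [0,1]$, and set $\alpha = p - q$ with $\alpha > -1$. Define $M_n = (X_n - \mathbb{E}[X_n])/a_n$ where $a_n = \Gamma(n+\alpha)/(\Gamma(n)\Gamma(1+\alpha))$. Then $(M_n)_{n\geq 1}$ is a martingale with respect to the filtration $\mathcal{F}_n = \sigma(\eta_1,\dots,\eta_n)$. -/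
open MeasureTheory ProbabilityTheory Filter Real BoundedContinuousFunction

noncomputable section

/-- The minimal random walk of Kumar–Harbola–Lindenberg: increments `η n ∈ {0,1}`,
`P(η 1 = 1) = s`, and for `n ≥ 1` the conditional expectation (i.e. conditional
probability of a forward step) given `σ(η 1, …, η n)` is `q + (p-q) X_n / n`,
where `X_n = ∑_{k=1}^n η k`. -/
structure IsMinimalRW {Ω : Type*} [MeasurableSpace Ω] (μ : Measure Ω)
    (p q s : ℝ) (η : ℕ → Ω → ℝ) : Prop where
  meas : ∀ n, Measurable (η n)
  zero : ∀ ω, η 0 ω = 0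
  vals : ∀ n, 1 ≤ n → ∀ᵐ ω ∂μ, η n ω = 0 ∨ η n ω = 1
  init : (μ {ω | η 1 ω = 1}).toReal = s
  cond : ∀ n : ℕ, 1 ≤ n →
      μ[η (n + 1) | ⨆ i ∈ Finset.Icc 1 n, MeasurableSpace.comap (η i) inferInstance]
        =ᵐ[μ] fun ω => q + (p - q) * (∑ k ∈ Finset.Icc 1 n, η k ω) / n

/-- The position of the walk, `X_n = ∑_{k=1}^n η_k`. -/
def walkPos {Ω : Type*} (η : ℕ → Ω → ℝ) (n : ℕ) (ω : Ω) : ℝ := ∑ k ∈ Finset.Icc 1 n, η k ω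

/-- The normalizing sequence `a_n = Γ(n+α)/(Γ(n)Γ(1+α))`. -/
def aSeq (α : ℝ) (n : ℕ) : ℝ := Real.Gamma (n + α) / (Real.Gamma n * Real.Gamma (1 + α))

/-!
Write `X_n` for the position of the walk and `ℱ_n` for the natural filtration. The defining
property of the walk gives the affine recursion `E[X_{n+1} | ℱ_n] = (1 + α/n) X_n + q` for
`n ≥ 1`; taking expectations, `E X_{n+1} = (1 + α/n) E X_n + q`, so the centred walk satisfies
`E[X_{n+1} - E X_{n+1} | ℱ_n] = (1 + α/n) (X_n - E X_n)`. The functional equation of `Γ` gives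
`a_{n+1} = (1 + α/n) a_n`, and dividing by `a_{n+1}` is exactly the martingale property.
At `n = 0` the σ-algebra `ℱ_0` is trivial, so `E[M_1 | ℱ_0] = E M_1 = 0 = M_0`.
-/

section CondExpAffine

variable {Ω : Type*} {m m₀ : MeasurableSpace Ω} {μ : Measure Ω} [IsProbabilityMeasure μ]

theorem integral_eq_of_condExp_ae_eq_affine (hm : m ≤ m₀) {f g : Ω → ℝ}
    (hg : Integrable g μ) {c d : ℝ} (hfg : μ[f | m] =ᵐ[μ] fun ω => c * g ω + d) :
    ∫ ω, f ω ∂μ = c * ∫ ω, g ω ∂μ + d := by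
  rw [← integral_condExp hm, integral_congr_ae hfg, integral_add (hg.const_mul c)
    (integrable_const d), integral_const_mul, integral_const, probReal_univ, one_smul]

theorem condExp_sub_integral_div_mul_ae_eq (hm : m ≤ m₀) {f g : Ω → ℝ}
    (hf : Integrable f μ) (hg : Integrable g μ) {a c d : ℝ} (hca : c * a ≠ 0)
    (hfg : μ[f | m] =ᵐ[μ] fun ω => c * g ω + d) :
    μ[fun ω => (f ω - ∫ x, f x ∂μ) / (c * a) | m]
      =ᵐ[μ] fun ω => (g ω - ∫ x, g x ∂μ) / a := by
  have hmean := integral_eq_of_condExp_ae_eq_affine hm hg hfg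
  have hsmul : (fun ω => (f ω - ∫ x, f x ∂μ) / (c * a))
      = (c * a)⁻¹ • (f - fun _ => ∫ x, f x ∂μ) := by
    ext ω
    simp only [Pi.smul_apply, Pi.sub_apply, smul_eq_mul, div_eq_inv_mul]
  rw [hsmul]
  filter_upwards [condExp_smul (c * a)⁻¹ (f - fun _ => ∫ x, f x ∂μ) m,
    condExp_sub hf (integrable_const (∫ x, f x ∂μ)) m, hfg] with ω hcs hsub hfg'
  rw [hcs, Pi.smul_apply, hsub, Pi.sub_apply, condExp_const hm, hfg', hmean, smul_eq_mul]
  have ha : a ≠ 0 := right_ne_zero_of_mul hca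
  have hc : c ≠ 0 := left_ne_zero_of_mul hca
  field_simp
  ring

theorem condExp_bot_sub_integral_div {f : Ω → ℝ} (hf : Integrable f μ) (a : ℝ) :
    μ[fun ω => (f ω - ∫ x, f x ∂μ) / a | ⊥] = 0 := by
  rw [condExp_bot, integral_div, integral_sub hf (integrable_const _), integral_const,
    probReal_univ, one_smul, sub_self, zero_div]
  rfl

end CondExpAffine

theorem aSeq_pos {α : ℝ} (hα : -1 < α) {n : ℕ} (hn : n ≠ 0) : 0 < aSeq α n := by
  have hn : (1 : ℝ) ≤ n := by exact_mod_cast Nat.one_le_iff_ne_zero.mpr hn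
  unfold aSeq
  exact div_pos (Real.Gamma_pos_of_pos (by linarith))
    (mul_pos (Real.Gamma_pos_of_pos (by linarith)) (Real.Gamma_pos_of_pos (by linarith)))

theorem aSeq_succ {α : ℝ} {n : ℕ} (hn : n ≠ 0) (hnα : (n : ℝ) + α ≠ 0) :
    aSeq α (n + 1) = (1 + α / n) * aSeq α n := by
  have hn : (n : ℝ) ≠ 0 := Nat.cast_ne_zero.mpr hn
  unfold aSeq
  rw [Nat.cast_succ, add_right_comm, Real.Gamma_add_one hnα, Real.Gamma_add_one hn]
  field_simp

section Walk

variable {Ω : Type*} {η : ℕ → Ω → ℝ}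

@[simp]
theorem walkPos_zero (η : ℕ → Ω → ℝ) : walkPos η 0 = 0 := by
  ext ω
  simp [walkPos]

theorem walkPos_succ (η : ℕ → Ω → ℝ) (n : ℕ) :
    walkPos η (n + 1) = walkPos η n + η (n + 1) := by
  ext ω
  exact Finset.sum_Icc_succ_top (Nat.le_add_left 1 n) _

variable [MeasurableSpace Ω]

theorem stronglyAdapted_walkPos (hη : ∀ n, StronglyMeasurable (η n)) :
    StronglyAdapted (Filtration.natural η hη) (walkPos η) := fun _ =>
  Finset.stronglyMeasurable_fun_sum _ fun k hk =>
    (Filtration.stronglyAdapted_natural hη k).mono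
      (Filtration.mono _ (Finset.mem_Icc.mp hk).2)

theorem Filtration.natural_eq_iSup_Icc (hη : ∀ n, StronglyMeasurable (η n)) (hη₀ : η 0 = 0)
    (n : ℕ) : Filtration.natural η hη n
      = ⨆ i ∈ Finset.Icc 1 n, MeasurableSpace.comap (η i) inferInstance := by
  apply le_antisymm
  · refine iSup₂_le fun j hj => ?_
    rcases Nat.eq_zero_or_pos j with rfl | hj₀
    · rw [hη₀, Pi.zero_def, MeasurableSpace.comap_const]
      exact bot_le
    · exact le_iSup₂ (f := fun i (_ : i ∈ Finset.Icc 1 n) =>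
        MeasurableSpace.comap (η i) inferInstance) j (Finset.mem_Icc.2 ⟨hj₀, hj⟩)
  · exact iSup₂_le fun j hj => le_iSup₂ (f := fun j (_ : j ≤ n) =>
      MeasurableSpace.comap (η j) inferInstance) j (Finset.mem_Icc.1 hj).2

end Walk

namespace IsMinimalRW

variable {Ω : Type*} [MeasurableSpace Ω] {μ : Measure Ω} {p q s : ℝ} {η : ℕ → Ω → ℝ}

theorem integrable [IsFiniteMeasure μ] (hrw : IsMinimalRW μ p q s η) (n : ℕ) :
    Integrable (η n) μ := by
  refine Integrable.of_bound (hrw.meas n).aestronglyMeasurable 1 ?_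
  rcases Nat.eq_zero_or_pos n with rfl | hn
  · exact Eventually.of_forall fun ω => by simp [hrw.zero ω]
  · filter_upwards [hrw.vals n hn] with ω hω
    rcases hω with h | h <;> simp [h]

theorem integrable_walkPos [IsFiniteMeasure μ] (hrw : IsMinimalRW μ p q s η) (n : ℕ) :
    Integrable (walkPos η n) μ :=
  integrable_finsetSum (Finset.Icc 1 n) fun k _ => hrw.integrable k

theorem condExp_walkPos_succ [IsFiniteMeasure μ] (hrw : IsMinimalRW μ p q s η)
    (hη : ∀ n, StronglyMeasurable (η n)) {n : ℕ} (hn : n ≠ 0) :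
    μ[walkPos η (n + 1) | Filtration.natural η hη n]
      =ᵐ[μ] fun ω => (1 + (p - q) / n) * walkPos η n ω + q := by
  have hstep : μ[η (n + 1) | Filtration.natural η hη n]
      =ᵐ[μ] fun ω => q + (p - q) * walkPos η n ω / n := by
    rw [Filtration.natural_eq_iSup_Icc hη (funext hrw.zero)]
    exact hrw.cond n (Nat.one_le_iff_ne_zero.mpr hn)
  have hn : (n : ℝ) ≠ 0 := Nat.cast_ne_zero.mpr hn
  rw [walkPos_succ]
  filter_upwards [condExp_add (hrw.integrable_walkPos n) (hrw.integrable (n + 1)) _, hstep]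
    with ω hadd hstep'
  rw [hadd, Pi.add_apply, condExp_of_stronglyMeasurable ((Filtration.natural η hη).le n)
    (stronglyAdapted_walkPos hη n) (hrw.integrable_walkPos n), hstep']
  field_simp
  ring

end IsMinimalRW

theorem minimalRW_martingale_general {Ω : Type*} [MeasurableSpace Ω] (μ : Measure Ω)
    [IsProbabilityMeasure μ] (p q s : ℝ) (hα : -1 < p - q) (η : ℕ → Ω → ℝ)
    (hrw : IsMinimalRW μ p q s η) (hη : ∀ n, StronglyMeasurable (η n)) :
    Martingale
      (fun n ω => (walkPos η n ω - ∫ ω', walkPos η n ω' ∂μ) / aSeq (p - q) n)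
      (Filtration.natural η hη) μ := by
  have hX := hrw.integrable_walkPos
  refine martingale_nat (fun n =>
      (((stronglyAdapted_walkPos hη n).measurable.sub_const _).div_const _).stronglyMeasurable)
    (fun n => ((hX n).sub (integrable_const _)).div_const _) fun n => ?_
  rcases Nat.eq_zero_or_pos n with rfl | hn
  · have hbot : Filtration.natural η hη 0 = ⊥ := by
      simp [Filtration.natural_eq_iSup_Icc hη (funext hrw.zero)]
    rw [hbot, condExp_bot_sub_integral_div (hX 1)]
    simp only [walkPos_zero, Pi.zero_apply, integral_zero, sub_self, zero_div]
    rfl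
  · have hnα : (0 : ℝ) < n + (p - q) := by
      have : (1 : ℝ) ≤ n := by exact_mod_cast hn
      linarith
    have ha := aSeq_pos hα n.succ_ne_zero
    rw [aSeq_succ hn.ne' hnα.ne'] at ha ⊢
    exact (condExp_sub_integral_div_mul_ae_eq ((Filtration.natural η hη).le n) (hX _) (hX _)
      ha.ne' (hrw.condExp_walkPos_succ hη hn.ne')).symm

/-- `M_n = (X_n - E[X_n])/a_n` is a martingale w.r.t. the natural filtration. -/
theorem minimalRW_martingale {Ω : Type*} [MeasurableSpace Ω] (μ : Measure Ω)
    [IsProbabilityMeasure μ] (p q s : ℝ) (hp : p ∈ Set.Icc (0:ℝ) 1) (hq : q ∈ Set.Icc (0:ℝ) 1)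
    (hs : s ∈ Set.Icc (0:ℝ) 1) (hα : -1 < p - q) (η : ℕ → Ω → ℝ)
    (hrw : IsMinimalRW μ p q s η) (hη : ∀ n, StronglyMeasurable (η n)) :
    Martingale
      (fun n ω => (walkPos η n ω - ∫ ω', walkPos η n ω' ∂μ) / aSeq (p - q) n)
      (Filtration.natural η hη) μ :=
  minimalRW_martingale_general μ p q s hα η hrw hη
end
end

section
/- Let $(X_n)$ be the minimal random walk with $\alpha = p - q \in [-1, 1)$. Then $\lim_{n\to\infty} X_n/n = q/(1-\alpha)$ almost surely. -/
open MeasureTheory ProbabilityTheory Filter Real BoundedContinuousFunction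

noncomputable section

/-!
Let `L = q / (1 - α)` and `Z n = X n / n - L`. Then `Z (n + 1) = Z n + D / (n + 1)` with
`D = η (n + 1) - X n / n ∈ [-1, 1]`, and the defining property of the walk says that the
conditional mean of `D` given the past is `-(1 - α) Z n`. Hence `e n = 𝔼[Z n ^ 2]` satisfies
`e (n + 1) ≤ (1 - 2 (1 - α) / (n + 1)) e n + 1 / (n + 1) ^ 2`, and telescoping gives
`∑ e n / (n + 1) < ∞`, so `∑ Z n ^ 2 / (n + 1) < ∞` almost surely. As `Z` moves by at most
`1 / (n + 1)` per step, `|Z n| ≥ ε` forces `|Z| ≥ ε / 2` on a block of length `≈ ε n` after `n`,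
which contributes `≳ ε²` to the tail of that series; hence `Z n → 0`.
-/

open Finset

theorem abs_sub_le_of_abs_sub_succ_le {z : ℕ → ℝ} {C : ℝ}
    (hz : ∀ n : ℕ, |z (n + 1) - z n| ≤ C / (n + 1)) (n j : ℕ) :
    |z (n + j) - z n| ≤ C * j / (n + 1) := by
  have hC : 0 ≤ C := by simpa using (abs_nonneg _).trans (hz 0)
  induction j with
  | zero => simp
  | succ j ih =>
    have hstep : |z (n + j + 1) - z (n + j)| ≤ C / (n + 1) :=
      (hz (n + j)).trans (div_le_div_of_nonneg_left hC (by positivity) (by simp))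
    calc |z (n + (j + 1)) - z n| ≤ |z (n + j + 1) - z (n + j)| + |z (n + j) - z n| :=
          abs_sub_le _ _ _
      _ ≤ C / (n + 1) + C * j / (n + 1) := add_le_add hstep ih
      _ = C * ↑(j + 1) / (n + 1) := by push_cast; ring

theorem le_sum_sq_div_of_abs_sub_succ_le {z : ℕ → ℝ} {C ε : ℝ}
    (hz : ∀ n : ℕ, |z (n + 1) - z n| ≤ C / (n + 1)) {K : ℕ} (hK : 0 < K)
    (hε : 0 ≤ ε) (hKε : 2 * C ≤ K * ε) {n : ℕ} (hzn : ε ≤ |z n|) :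
    ε ^ 2 / (12 * K) ≤ ∑ j ∈ range (n / K + 1), z (n + j) ^ 2 / (↑(n + j) + 1) := by
  have hC : 0 ≤ C := by simpa using (abs_nonneg _).trans (hz 0)
  set k := n / K
  have hkK : (k : ℝ) * K ≤ n := by exact_mod_cast Nat.div_mul_le_self n K
  have hnK : (n : ℝ) + 1 ≤ (k + 1) * K := by
    have := Nat.lt_mul_div_succ n hK
    rw [mul_comm] at this
    exact_mod_cast this
  have hterm : ∀ j ∈ range (k + 1), ε ^ 2 / (4 * (2 * n + 1)) ≤ z (n + j) ^ 2 / (↑(n + j) + 1) := by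
    intro j hj
    have hjk : (j : ℝ) ≤ k := by exact_mod_cast Nat.lt_succ_iff.1 (mem_range.1 hj)
    have hdrift : |z (n + j) - z n| ≤ ε / 2 := by
      refine (abs_sub_le_of_abs_sub_succ_le hz n j).trans ?_
      rw [div_le_iff₀ (by positivity)]
      nlinarith [mul_le_mul_of_nonneg_left hjk hC]
    have hzj : ε / 2 ≤ |z (n + j)| := by
      linarith [abs_sub_abs_le_abs_sub (z n) (z (n + j)), abs_sub_comm (z n) (z (n + j))]
    have hsq : ε ^ 2 / 4 ≤ z (n + j) ^ 2 := by
      nlinarith [sq_abs (z (n + j))]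
    have hjn : (j : ℝ) ≤ n := hjk.trans (by exact_mod_cast Nat.div_le_self n K)
    rw [div_le_div_iff₀ (by positivity) (by positivity)]
    push_cast
    nlinarith
  calc ε ^ 2 / (12 * K) ≤ (k + 1) * (ε ^ 2 / (4 * (2 * n + 1))) := by
        rw [← mul_div_assoc, div_le_div_iff₀ (by positivity) (by positivity)]
        nlinarith [mul_le_mul_of_nonneg_left hnK (sq_nonneg ε)]
    _ ≤ _ := by
      simpa using card_nsmul_le_sum _ _ _ hterm

theorem tendsto_zero_of_summable_sq_div_of_abs_sub_succ_le {z : ℕ → ℝ} {C : ℝ}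
    (hz : ∀ n : ℕ, |z (n + 1) - z n| ≤ C / (n + 1))
    (hsum : Summable fun n : ℕ => z n ^ 2 / (n + 1)) :
    Tendsto z atTop (nhds 0) := by
  have hC : 0 ≤ C := by simpa using (abs_nonneg _).trans (hz 0)
  rw [Metric.tendsto_atTop]
  intro ε hε
  obtain ⟨K, hK⟩ := exists_nat_gt (2 * C / ε)
  have hK0 : 0 < K := by exact_mod_cast (by positivity : 0 ≤ 2 * C / ε).trans_lt hK
  have hKε : 2 * C ≤ K * ε := ((div_lt_iff₀ hε).1 hK).le
  obtain ⟨N, hN⟩ := eventually_atTop.1 <|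
    (tendsto_sum_nat_add fun n : ℕ => z n ^ 2 / (n + 1)).eventually
      (gt_mem_nhds (by positivity : 0 < ε ^ 2 / (12 * K)))
  refine ⟨N, fun n hn => ?_⟩
  rw [Real.dist_0_eq_abs]
  by_contra! hzn
  have hblock := le_sum_sq_div_of_abs_sub_succ_le hz hK0 hε.le hKε hzn
  have htail : ∑ j ∈ range (n / K + 1), z (n + j) ^ 2 / (↑(n + j) + 1) ≤
      ∑' j, z (j + n) ^ 2 / (↑(j + n) + 1) := by
    simp_rw [add_comm n]
    exact ((summable_nat_add_iff n).2 hsum).sum_le_tsum _ (fun j _ => by positivity)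
  linarith [hN n hn]

theorem summable_mul_of_eventually_le_sub_mul_add {e w r : ℕ → ℝ} (he : ∀ n, 0 ≤ e n)
    (hw : ∀ n, 0 ≤ w n) (hr0 : ∀ n, 0 ≤ r n) (hr : Summable r)
    (hrec : ∀ᶠ n in atTop, e (n + 1) ≤ e n - w n * e n + r n) :
    Summable fun n => w n * e n := by
  obtain ⟨N, hN⟩ := eventually_atTop.1 hrec
  rw [← summable_nat_add_iff N]
  have htel : ∀ m, ∑ i ∈ range m, w (i + N) * e (i + N) + e (m + N) ≤
      e N + ∑ i ∈ range m, r (i + N) := by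
    intro m
    induction m with
    | zero => simp
    | succ m ih =>
      rw [sum_range_succ, sum_range_succ, add_right_comm m 1 N]
      linarith [hN (m + N) (Nat.le_add_left N m)]
  refine summable_of_sum_range_le (c := e N + ∑' i, r (i + N))
    (fun i => mul_nonneg (hw _) (he _)) fun m => ?_
  have := ((summable_nat_add_iff N).2 hr).sum_le_tsum (range m) (fun i _ => hr0 _)
  linarith [htel m, he (m + N)]

theorem ae_summable_of_summable_integral {Ω : Type*} [MeasurableSpace Ω] {μ : Measure Ω}
    {f : ℕ → Ω → ℝ} (hf : ∀ n, Integrable (f n) μ) (hf0 : ∀ n, 0 ≤ᵐ[μ] f n)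
    (hsum : Summable fun n => ∫ ω, f n ω ∂μ) :
    ∀ᵐ ω ∂μ, Summable fun n => f n ω := by
  have hnorm : ∀ n, eLpNorm (f n) 1 μ = ENNReal.ofReal (∫ ω, f n ω ∂μ) := fun n => by
    rw [eLpNorm_one_eq_lintegral_enorm, ← ofReal_integral_norm_eq_lintegral_enorm (hf n)]
    congr 1
    refine integral_congr_ae ?_
    filter_upwards [hf0 n] with ω hω using Real.norm_of_nonneg hω
  have hfin : ∑' n, eLpNorm (f n) 1 μ ≠ ⊤ := by
    simp_rw [hnorm, ← ENNReal.ofReal_tsum_of_nonneg (fun n => integral_nonneg_of_ae (hf0 n)) hsum]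
    exact ENNReal.ofReal_ne_top
  filter_upwards [summable_norm_of_tsum_eLpNorm_ne_top le_rfl
    (fun n => (hf n).aestronglyMeasurable) hfin] with ω hω using hω.of_norm

theorem integral_sq_add_mul_le {Ω : Type*} {m m₀ : MeasurableSpace Ω} {μ : Measure[m₀] Ω}
    [IsProbabilityMeasure μ] (hm : m ≤ m₀) {Z D : Ω → ℝ} {B c t : ℝ}
    (hZ : StronglyMeasurable[m] Z) (hZB : ∀ᵐ ω ∂μ, |Z ω| ≤ B)
    (hD : AEStronglyMeasurable D μ) (hD1 : ∀ᵐ ω ∂μ, |D ω| ≤ 1)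
    (hcond : μ[D | m] =ᵐ[μ] fun ω => -c * Z ω) :
    ∫ ω, (Z ω + t * D ω) ^ 2 ∂μ ≤ (1 - 2 * c * t) * ∫ ω, Z ω ^ 2 ∂μ + t ^ 2 := by
  have hZm : AEStronglyMeasurable Z μ := (hZ.mono hm).aestronglyMeasurable
  have hZB' : ∀ᵐ ω ∂μ, ‖Z ω‖ ≤ B := by simpa using hZB
  have hDi : Integrable D μ := .of_bound hD 1 (by simpa using hD1)
  have hZ2 : Integrable (fun ω => Z ω ^ 2) μ := by
    simpa [sq] using (Integrable.of_bound hZm B hZB').bdd_mul hZm hZB'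
  have hZD : Integrable (fun ω => Z ω * D ω) μ := hDi.bdd_mul hZm hZB'
  have hcross : ∫ ω, Z ω * D ω ∂μ = -c * ∫ ω, Z ω ^ 2 ∂μ := calc
    ∫ ω, Z ω * D ω ∂μ = ∫ ω, Z ω * μ[D | m] ω ∂μ := by
      rw [← integral_condExp hm]
      exact integral_congr_ae (condExp_stronglyMeasurable_mul_of_bound hm hZ hDi B hZB')
    _ = ∫ ω, -c * Z ω ^ 2 ∂μ := integral_congr_ae <| by
      filter_upwards [hcond] with ω hω
      rw [hω]; ring
    _ = -c * ∫ ω, Z ω ^ 2 ∂μ := integral_const_mul _ _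
  calc ∫ ω, (Z ω + t * D ω) ^ 2 ∂μ ≤ ∫ ω, (Z ω ^ 2 + 2 * t * (Z ω * D ω) + t ^ 2) ∂μ := by
        refine integral_mono_of_nonneg (.of_forall fun _ => sq_nonneg _)
          ((hZ2.add (hZD.const_mul _)).add (integrable_const _)) ?_
        filter_upwards [hD1] with ω hω
        have hD2 : D ω ^ 2 ≤ 1 := (sq_le_one_iff_abs_le_one _).2 hω
        nlinarith [mul_le_mul_of_nonneg_left hD2 (sq_nonneg t)]
    _ = (1 - 2 * c * t) * ∫ ω, Z ω ^ 2 ∂μ + t ^ 2 := by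
      have hZD' : Integrable (fun ω => 2 * t * (Z ω * D ω)) μ := hZD.const_mul _
      have hsum : Integrable (fun ω => Z ω ^ 2 + 2 * t * (Z ω * D ω)) μ := hZ2.add hZD'
      rw [integral_add hsum (integrable_const _), integral_add hZ2 hZD', integral_const_mul, hcross]
      simp only [integral_const, probReal_univ, one_smul]
      ring

abbrev walkHistory {Ω : Type*} (η : ℕ → Ω → ℝ) (n : ℕ) : MeasurableSpace Ω :=
  ⨆ i ∈ Finset.Icc 1 n, MeasurableSpace.comap (η i) inferInstance

section Walk

variable {Ω : Type*} {η : ℕ → Ω → ℝ}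

theorem measurable_walkPos_walkHistory (n : ℕ) :
    Measurable[walkHistory η n] (walkPos η n) :=
  measurable_sum _ fun i hi => Measurable.of_comap_le <|
    le_iSup₂ (f := fun i (_ : i ∈ Icc 1 n) => MeasurableSpace.comap (η i) inferInstance) i hi

-- Also true for `n = 0`, where `walkPos η 0 ω / 0 = 0`.
theorem walkPos_succ_div (n : ℕ) (ω : Ω) :
    walkPos η (n + 1) ω / ↑(n + 1) =
      walkPos η n ω / n + (η (n + 1) ω - walkPos η n ω / n) / (n + 1) := by
  have hsucc : walkPos η (n + 1) ω = walkPos η n ω + η (n + 1) ω :=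
    sum_Icc_succ_top (Nat.le_add_left 1 n) _
  rcases Nat.eq_zero_or_pos n with rfl | hn
  · simp [walkPos]
  · rw [hsucc]
    push_cast
    field_simp
    ring

theorem walkPos_div_mem_Icc {ω : Ω} (hω : ∀ k, η k ω ∈ Set.Icc (0 : ℝ) 1) (n : ℕ) :
    walkPos η n ω / n ∈ Set.Icc (0 : ℝ) 1 := by
  have hX : walkPos η n ω ∈ Set.Icc (0 : ℝ) n := by
    constructor
    · exact sum_nonneg fun k _ => (hω k).1
    · simpa [walkPos] using sum_le_sum fun k (_ : k ∈ Icc 1 n) => (hω k).2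
  rcases Nat.eq_zero_or_pos n with rfl | hn
  · simp
  · have hn' : (0 : ℝ) < n := by exact_mod_cast hn
    exact ⟨div_nonneg hX.1 hn'.le, (div_le_one hn').2 hX.2⟩

theorem abs_sub_walkPos_div_le_one {ω : Ω} (hω : ∀ k, η k ω ∈ Set.Icc (0 : ℝ) 1) (n : ℕ) :
    |η (n + 1) ω - walkPos η n ω / n| ≤ 1 := by
  have h₁ := hω (n + 1)
  have h₂ := walkPos_div_mem_Icc hω n
  rw [abs_le]; constructor <;> linarith [h₁.1, h₁.2, h₂.1, h₂.2]

theorem abs_walkPos_div_sub_le {ω : Ω} (hω : ∀ k, η k ω ∈ Set.Icc (0 : ℝ) 1) (n : ℕ) (L : ℝ) :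
    |walkPos η n ω / n - L| ≤ 1 + |L| := by
  have hX := walkPos_div_mem_Icc hω n
  calc |walkPos η n ω / n - L| ≤ |walkPos η n ω / n| + |L| := abs_sub _ _
    _ ≤ 1 + |L| := by rw [abs_of_nonneg hX.1]; linarith [hX.2]

theorem abs_walkPos_div_succ_sub_le {ω : Ω} (hω : ∀ k, η k ω ∈ Set.Icc (0 : ℝ) 1) (n : ℕ) :
    |walkPos η (n + 1) ω / ↑(n + 1) - walkPos η n ω / n| ≤ 1 / (n + 1) := by
  have hn : (0 : ℝ) < n + 1 := by positivity
  rw [walkPos_succ_div, add_sub_cancel_left, abs_div, abs_of_pos hn]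
  exact div_le_div_of_nonneg_right (abs_sub_walkPos_div_le_one hω n) hn.le

variable [MeasurableSpace Ω] {μ : Measure Ω} {p q s : ℝ}

theorem walkHistory_le (hη : ∀ n, Measurable (η n)) (n : ℕ) :
    walkHistory η n ≤ ‹MeasurableSpace Ω› :=
  iSup₂_le fun i _ => (hη i).comap_le

namespace IsMinimalRW

theorem ae_forall_mem_Icc (hrw : IsMinimalRW μ p q s η) :
    ∀ᵐ ω ∂μ, ∀ n, η n ω ∈ Set.Icc (0 : ℝ) 1 := by
  rw [ae_all_iff]
  intro n
  rcases Nat.eq_zero_or_pos n with rfl | hn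
  · exact .of_forall fun ω => by simp [hrw.zero ω]
  · filter_upwards [hrw.vals n hn] with ω hω
    rcases hω with h | h <;> simp [h]

theorem measurable_walkPos (hrw : IsMinimalRW μ p q s η) (n : ℕ) : Measurable (walkPos η n) :=
  (measurable_walkPos_walkHistory n).mono (walkHistory_le hrw.meas n) le_rfl

variable [IsProbabilityMeasure μ]

theorem condExp_sub_walkPos_div (hrw : IsMinimalRW μ p q s η) (hα : p - q ≠ 1) {n : ℕ}
    (hn : 1 ≤ n) :
    μ[fun ω => η (n + 1) ω - walkPos η n ω / n | walkHistory η n] =ᵐ[μ]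
      fun ω => -(1 - (p - q)) * (walkPos η n ω / n - q / (1 - (p - q))) := by
  have hm := walkHistory_le hrw.meas n
  have hη : Integrable (η (n + 1)) μ := .of_bound (hrw.meas _).aestronglyMeasurable 1 <| by
    filter_upwards [hrw.ae_forall_mem_Icc] with ω hω
    rw [Real.norm_of_nonneg (hω _).1]; exact (hω _).2
  have hXm : StronglyMeasurable[walkHistory η n] fun ω => walkPos η n ω / n :=
    ((measurable_walkPos_walkHistory n).div_const _).stronglyMeasurable
  have hX : Integrable (fun ω => walkPos η n ω / n) μ :=
    .of_bound (hXm.mono hm).aestronglyMeasurable 1 <| by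
      filter_upwards [hrw.ae_forall_mem_Icc] with ω hω
      have := walkPos_div_mem_Icc hω n
      rw [Real.norm_of_nonneg this.1]; exact this.2
  have hc : 1 - (p - q) ≠ 0 := sub_ne_zero.2 (Ne.symm hα)
  refine (condExp_sub hη hX _).trans ?_
  rw [condExp_of_stronglyMeasurable hm hXm hX]
  have hcond : μ[η (n + 1) | walkHistory η n] =ᵐ[μ]
      fun ω => q + (p - q) * walkPos η n ω / n := hrw.cond n hn
  filter_upwards [hcond] with ω hω
  rw [Pi.sub_apply, hω]
  field_simp
  ring

theorem integral_sq_succ_le (hrw : IsMinimalRW μ p q s η) (hα : p - q ≠ 1) {n : ℕ} (hn : 1 ≤ n) :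
    ∫ ω, (walkPos η (n + 1) ω / ↑(n + 1) - q / (1 - (p - q))) ^ 2 ∂μ ≤
      ∫ ω, (walkPos η n ω / n - q / (1 - (p - q))) ^ 2 ∂μ -
        2 * (1 - (p - q)) / (n + 1) * ∫ ω, (walkPos η n ω / n - q / (1 - (p - q))) ^ 2 ∂μ +
        1 / (n + 1) ^ 2 := by
  set L := q / (1 - (p - q))
  have hZ : StronglyMeasurable[walkHistory η n] fun ω => walkPos η n ω / n - L :=
    (((measurable_walkPos_walkHistory n).div_const _).sub_const _).stronglyMeasurable
  have hZB : ∀ᵐ ω ∂μ, |walkPos η n ω / n - L| ≤ 1 + |L| := by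
    filter_upwards [hrw.ae_forall_mem_Icc] with ω hω using abs_walkPos_div_sub_le hω n L
  have hD : AEStronglyMeasurable (fun ω => η (n + 1) ω - walkPos η n ω / n) μ :=
    ((hrw.meas _).sub ((hrw.measurable_walkPos n).div_const _)).aestronglyMeasurable
  have hD1 : ∀ᵐ ω ∂μ, |η (n + 1) ω - walkPos η n ω / n| ≤ 1 := by
    filter_upwards [hrw.ae_forall_mem_Icc] with ω hω using abs_sub_walkPos_div_le_one hω n
  have hstep : ∀ ω, walkPos η (n + 1) ω / ↑(n + 1) - L =
      walkPos η n ω / n - L + 1 / (n + 1) * (η (n + 1) ω - walkPos η n ω / n) := fun ω => by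
    rw [walkPos_succ_div]; ring
  simp_rw [hstep]
  have := integral_sq_add_mul_le (walkHistory_le hrw.meas n) hZ hZB hD hD1
    (hrw.condExp_sub_walkPos_div hα hn) (t := 1 / (n + 1))
  generalize ∫ ω, (walkPos η n ω / n - L) ^ 2 ∂μ = e at this ⊢
  calc _ ≤ _ := this
    _ = _ := by rw [one_div_pow]; ring

theorem summable_integral_sq_div (hrw : IsMinimalRW μ p q s η) (hα : p - q < 1) :
    Summable fun n : ℕ => ∫ ω, (walkPos η n ω / n - q / (1 - (p - q))) ^ 2 / (n + 1) ∂μ := by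
  have hc : 0 < 1 - (p - q) := sub_pos.2 hα
  have hr : Summable fun n : ℕ => 1 / ((n : ℝ) + 1) ^ 2 := by
    simpa using (summable_nat_add_iff 1).2 (Real.summable_one_div_nat_pow.2 one_lt_two)
  have h := summable_mul_of_eventually_le_sub_mul_add
    (e := fun n => ∫ ω, (walkPos η n ω / n - q / (1 - (p - q))) ^ 2 ∂μ)
    (w := fun n => 2 * (1 - (p - q)) / (n + 1))
    (fun n => integral_nonneg fun _ => sq_nonneg _) (fun n => by positivity)
    (fun n => by positivity) hr
    (eventually_atTop.2 ⟨1, fun n hn => hrw.integral_sq_succ_le hα.ne hn⟩)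
  refine (h.mul_left (1 / (2 * (1 - (p - q))))).congr fun n => ?_
  rw [integral_div]
  field_simp

theorem ae_summable_sq_div (hrw : IsMinimalRW μ p q s η) (hα : p - q < 1) :
    ∀ᵐ ω ∂μ, Summable fun n : ℕ => (walkPos η n ω / n - q / (1 - (p - q))) ^ 2 / (n + 1) := by
  set L := q / (1 - (p - q))
  refine ae_summable_of_summable_integral (fun n => ?_) (fun n => .of_forall fun ω => by positivity)
    (hrw.summable_integral_sq_div hα)
  refine .of_bound ((((hrw.measurable_walkPos n).div_const _).sub_const _).pow_const 2
    |>.div_const _).aestronglyMeasurable ((1 + |L|) ^ 2) ?_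
  filter_upwards [hrw.ae_forall_mem_Icc] with ω hω
  rw [Real.norm_of_nonneg (by positivity)]
  calc (walkPos η n ω / n - L) ^ 2 / (n + 1) ≤ (walkPos η n ω / n - L) ^ 2 :=
        div_le_self (sq_nonneg _) (by linarith [n.cast_nonneg (α := ℝ)])
    _ ≤ (1 + |L|) ^ 2 := by
        rw [← sq_abs]
        exact pow_le_pow_left₀ (abs_nonneg _) (abs_walkPos_div_sub_le hω n L) 2

end IsMinimalRW

end Walk

theorem minimalRW_slln_general {Ω : Type*} [MeasurableSpace Ω] (μ : Measure Ω)
    [IsProbabilityMeasure μ] (p q s : ℝ) (hα₂ : p - q < 1) (η : ℕ → Ω → ℝ)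
    (hrw : IsMinimalRW μ p q s η) :
    ∀ᵐ ω ∂μ, Tendsto (fun n : ℕ => walkPos η n ω / n) atTop
      (nhds (q / (1 - (p - q)))) := by
  set L := q / (1 - (p - q))
  filter_upwards [hrw.ae_forall_mem_Icc, hrw.ae_summable_sq_div hα₂] with ω hω hsum
  have hstep : ∀ n : ℕ, |(walkPos η (n + 1) ω / ↑(n + 1) - L) - (walkPos η n ω / n - L)| ≤
      1 / (n + 1) := fun n => by
    rw [sub_sub_sub_cancel_right]
    exact abs_walkPos_div_succ_sub_le hω n
  simpa using (tendsto_zero_of_summable_sq_div_of_abs_sub_succ_le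
    (z := fun n => walkPos η n ω / n - L) hstep hsum).add_const L

/-- Strong law of large numbers for the minimal random walk. -/
theorem minimalRW_slln {Ω : Type*} [MeasurableSpace Ω] (μ : Measure Ω)
    [IsProbabilityMeasure μ] (p q s : ℝ) (hp : p ∈ Set.Icc (0:ℝ) 1) (hq : q ∈ Set.Icc (0:ℝ) 1)
    (hs : s ∈ Set.Icc (0:ℝ) 1) (hα₁ : -1 ≤ p - q) (hα₂ : p - q < 1) (η : ℕ → Ω → ℝ)
    (hrw : IsMinimalRW μ p q s η) :
    ∀ᵐ ω ∂μ, Tendsto (fun n : ℕ => walkPos η n ω / n) atTop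
      (nhds (q / (1 - (p - q)))) :=
  minimalRW_slln_general μ p q s hα₂ η hrw
end
end
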